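/- Let p : ℝ² → ℝ be a smooth positive solution of the system p_xx = −(4/3)p p_y, p_yy = −(4/3)p p_x, (log p)_xy = (4/9)p². Define V = −(1/2)(log p)_xx + (1/8)((log p)_x)² − (5/2)p_y and W = −(1/2)(log p)_yy + (1/8)((log p)_y)² − (5/2)p_x. Then (p, V, W) satisfies the stationary mVN system. -/

import Mathlib

noncomputable def px {E : Type*} [NormedAddCommGroup E] [NormedSpace ℝ E]
    (f : ℝ → ℝ → E) : ℝ → ℝ → E := fun x y => deriv (fun x' => f x' y) x

noncomputable def py {E : Type*} [NormedAddCommGroup E] [NormedSpace ℝ E]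
    (f : ℝ → ℝ → E) : ℝ → ℝ → E := fun x y => deriv (fun y' => f x y') y

def Smooth2 {E : Type*} [NormedAddCommGroup E] [NormedSpace ℝ E]
    (f : ℝ → ℝ → E) : Prop := ContDiff ℝ (⊤ : ℕ∞) (fun q : ℝ × ℝ => f q.1 q.2)

section aux
variable {f : ℝ → ℝ → ℝ}

lemma hasDerivAt_slice_x (hf : Smooth2 f) (x y : ℝ) :
    HasDerivAt (fun x' => f x' y) (fderiv ℝ (fun q : ℝ × ℝ => f q.1 q.2) (x, y) (1, 0)) x := by
  have hF : HasFDerivAt (fun q : ℝ × ℝ => f q.1 q.2)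
      (fderiv ℝ (fun q : ℝ × ℝ => f q.1 q.2) (x, y)) (x, y) :=
    (hf.differentiable (by simp) (x, y)).hasFDerivAt
  have hline : HasDerivAt (fun x' : ℝ => ((x' : ℝ), y)) ((1 : ℝ), (0 : ℝ)) x :=
    HasDerivAt.prodMk (hasDerivAt_id x) (hasDerivAt_const x y)
  exact hF.comp_hasDerivAt x hline

lemma hasDerivAt_slice_y (hf : Smooth2 f) (x y : ℝ) :
    HasDerivAt (fun y' => f x y') (fderiv ℝ (fun q : ℝ × ℝ => f q.1 q.2) (x, y) (0, 1)) y := by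
  have hF : HasFDerivAt (fun q : ℝ × ℝ => f q.1 q.2)
      (fderiv ℝ (fun q : ℝ × ℝ => f q.1 q.2) (x, y)) (x, y) :=
    (hf.differentiable (by simp) (x, y)).hasFDerivAt
  have hline : HasDerivAt (fun y' : ℝ => ((x : ℝ), y')) ((0 : ℝ), (1 : ℝ)) y :=
    HasDerivAt.prodMk (hasDerivAt_const y x) (hasDerivAt_id y)
  exact hF.comp_hasDerivAt y hline

lemma hdx (hf : Smooth2 f) (x y : ℝ) : HasDerivAt (fun x' => f x' y) (px f x y) x :=
  (hasDerivAt_slice_x hf x y).differentiableAt.hasDerivAt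

lemma hdy (hf : Smooth2 f) (x y : ℝ) : HasDerivAt (fun y' => f x y') (py f x y) y :=
  (hasDerivAt_slice_y hf x y).differentiableAt.hasDerivAt

lemma px_eq_fderiv (hf : Smooth2 f) (x y : ℝ) :
    px f x y = fderiv ℝ (fun q : ℝ × ℝ => f q.1 q.2) (x, y) (1, 0) :=
  (hasDerivAt_slice_x hf x y).deriv

lemma py_eq_fderiv (hf : Smooth2 f) (x y : ℝ) :
    py f x y = fderiv ℝ (fun q : ℝ × ℝ => f q.1 q.2) (x, y) (0, 1) :=
  (hasDerivAt_slice_y hf x y).deriv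

lemma smooth2_px (hf : Smooth2 f) : Smooth2 (px f) := by
  have h1 : ContDiff ℝ (⊤ : ℕ∞) (fun q : ℝ × ℝ => fderiv ℝ (fun q : ℝ × ℝ => f q.1 q.2) q (1, 0)) :=
    (hf.fderiv_right (by simp)).clm_apply contDiff_const
  have h2 : (fun q : ℝ × ℝ => px f q.1 q.2)
      = fun q : ℝ × ℝ => fderiv ℝ (fun q : ℝ × ℝ => f q.1 q.2) q (1, 0) := by
    funext q
    exact px_eq_fderiv hf q.1 q.2
  rw [Smooth2, h2]
  exact h1

lemma smooth2_py (hf : Smooth2 f) : Smooth2 (py f) := by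
  have h1 : ContDiff ℝ (⊤ : ℕ∞) (fun q : ℝ × ℝ => fderiv ℝ (fun q : ℝ × ℝ => f q.1 q.2) q (0, 1)) :=
    (hf.fderiv_right (by simp)).clm_apply contDiff_const
  have h2 : (fun q : ℝ × ℝ => py f q.1 q.2)
      = fun q : ℝ × ℝ => fderiv ℝ (fun q : ℝ × ℝ => f q.1 q.2) q (0, 1) := by
    funext q
    exact py_eq_fderiv hf q.1 q.2
  rw [Smooth2, h2]
  exact h1

lemma clairaut (hf : Smooth2 f) (x y : ℝ) : py (px f) x y = px (py f) x y := by
  set F : ℝ × ℝ → ℝ := fun q : ℝ × ℝ => f q.1 q.2 with hF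
  have hsym : IsSymmSndFDerivAt ℝ F (x, y) :=
    (hf.contDiffAt).isSymmSndFDerivAt (by rw [minSmoothness_of_isRCLikeNormedField]; exact (WithTop.coe_le_coe.mpr (le_top : (2 : ℕ∞) ≤ ⊤) : ((2 : ℕ∞) : WithTop ℕ∞) ≤ ((⊤ : ℕ∞) : WithTop ℕ∞)))
  have hdF : DifferentiableAt ℝ (fderiv ℝ F) (x, y) :=
    ((hf.fderiv_right (m := (⊤ : ℕ∞)) (by simp)).differentiable (by simp)) (x, y)
  have key : ∀ v w : ℝ × ℝ,
      fderiv ℝ (fun q => fderiv ℝ F q v) (x, y) w = fderiv ℝ (fderiv ℝ F) (x, y) w v := by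
    intro v w
    have : HasFDerivAt (fun q => fderiv ℝ F q v)
        ((ContinuousLinearMap.apply ℝ ℝ v).comp (fderiv ℝ (fderiv ℝ F) (x, y))) (x, y) :=
      (ContinuousLinearMap.apply ℝ ℝ v).hasFDerivAt.comp (x, y) hdF.hasFDerivAt
    rw [this.fderiv]
    rfl
  have e1 : py (px f) x y = fderiv ℝ (fderiv ℝ F) (x, y) (0, 1) (1, 0) := by
    have hx : (fun q : ℝ × ℝ => px f q.1 q.2) = fun q => fderiv ℝ F q (1, 0) := by
      funext q; exact px_eq_fderiv hf q.1 q.2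
    rw [py_eq_fderiv (smooth2_px hf) x y, hx, key]
  have e2 : px (py f) x y = fderiv ℝ (fderiv ℝ F) (x, y) (1, 0) (0, 1) := by
    have hy : (fun q : ℝ × ℝ => py f q.1 q.2) = fun q => fderiv ℝ F q (0, 1) := by
      funext q; exact py_eq_fderiv hf q.1 q.2
    rw [px_eq_fderiv (smooth2_py hf) x y, hy, key]
  rw [e1, e2, hsym (0, 1) (1, 0)]

end aux

set_option maxHeartbeats 1000000

/-- If a positive smooth `p` solves the Roman-surface system `p_xx = -(4/3)pp_y`,
`p_yy = -(4/3)pp_x`, `(log p)_xy = (4/9)p²`, then with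
`V = -(1/2)(log p)_xx + (1/8)((log p)_x)² - (5/2)p_y` and
`W = -(1/2)(log p)_yy + (1/8)((log p)_y)² - (5/2)p_x`, the triple `(p, V, W)`
solves the stationary mVN system. -/
theorem roman_surface_solves_smVN (p V W : ℝ → ℝ → ℝ)
    (hp : Smooth2 p) (hpos : ∀ x y, 0 < p x y)
    (h1 : ∀ x y, px (px p) x y = -(4/3) * p x y * py p x y)
    (h2 : ∀ x y, py (py p) x y = -(4/3) * p x y * px p x y)
    (h3 : ∀ x y, px (py (fun x y => Real.log (p x y))) x y = (4/9) * (p x y) ^ 2)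
    (hV : ∀ x y, V x y = -(1/2) * px (px (fun x y => Real.log (p x y))) x y
      + (1/8) * (px (fun x y => Real.log (p x y)) x y) ^ 2 - (5/2) * py p x y)
    (hW : ∀ x y, W x y = -(1/2) * py (py (fun x y => Real.log (p x y))) x y
      + (1/8) * (py (fun x y => Real.log (p x y)) x y) ^ 2 - (5/2) * px p x y) :
    (∀ x y, px (px (px p)) x y - 2 * V x y * px p x y - p x y * px V x y =
      py (py (py p)) x y - 2 * W x y * py p x y - p x y * py W x y) ∧
    (∀ x y, py V x y = (3/2) * px (fun x y => (p x y) ^ 2) x y) ∧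
    (∀ x y, px W x y = (3/2) * py (fun x y => (p x y) ^ 2) x y) := by
  have hne : ∀ x y, p x y ≠ 0 := fun x y => (hpos x y).ne'
  have spx : Smooth2 (px p) := smooth2_px hp
  have spy : Smooth2 (py p) := smooth2_py hp
  -- first log derivatives
  have hLx : ∀ x y, px (fun x y => Real.log (p x y)) x y = px p x y / p x y :=
    fun x y => ((hdx hp x y).log (hne x y)).deriv
  have hLy : ∀ x y, py (fun x y => Real.log (p x y)) x y = py p x y / p x y :=
    fun x y => ((hdy hp x y).log (hne x y)).deriv
  -- second log derivatives
  have hLxx : ∀ x y, px (px (fun x y => Real.log (p x y))) x y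
      = (px (px p) x y * p x y - px p x y * px p x y) / p x y ^ 2 := by
    intro x y
    have hfun : (fun x' => px (fun x y => Real.log (p x y)) x' y)
        = fun x' => px p x' y / p x' y := funext fun x' => hLx x' y
    show deriv (fun x' => px (fun x y => Real.log (p x y)) x' y) x = _
    rw [hfun]
    exact ((hdx spx x y).div (hdx hp x y) (hne x y)).deriv
  have hLyy : ∀ x y, py (py (fun x y => Real.log (p x y))) x y
      = (py (py p) x y * p x y - py p x y * py p x y) / p x y ^ 2 := by
    intro x y
    have hfun : (fun y' => py (fun x y => Real.log (p x y)) x y')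
        = fun y' => py p x y' / p x y' := funext fun y' => hLy x y'
    show deriv (fun y' => py (fun x y => Real.log (p x y)) x y') y = _
    rw [hfun]
    exact ((hdy spy x y).div (hdy hp x y) (hne x y)).deriv
  -- mixed second derivative of p
  have hpxy : ∀ x y, px (py p) x y = (4/9) * p x y ^ 3 + px p x y * py p x y / p x y := by
    intro x y
    have e : px (py (fun x y => Real.log (p x y))) x y
        = (px (py p) x y * p x y - py p x y * px p x y) / p x y ^ 2 := by
      have hfun : (fun x' => py (fun x y => Real.log (p x y)) x' y)
          = fun x' => py p x' y / p x' y := funext fun x' => hLy x' y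
      show deriv (fun x' => py (fun x y => Real.log (p x y)) x' y) x = _
      rw [hfun]
      exact ((hdx spy x y).div (hdx hp x y) (hne x y)).deriv
    have h3' := h3 x y
    rw [e] at h3'
    have hp0 := hne x y
    field_simp at h3' ⊢
    linear_combination h3'
  have hpyx : ∀ x y, py (px p) x y = (4/9) * p x y ^ 3 + px p x y * py p x y / p x y := by
    intro x y
    rw [clairaut hp x y]
    exact hpxy x y
  -- simplified forms of V and W
  have hVs : ∀ x y, V x y
      = 5/8 * (px p x y / p x y * (px p x y / p x y)) - 11/6 * py p x y := by
    intro x y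
    rw [hV x y, hLxx x y, hLx x y, h1 x y]
    have hp0 := hne x y
    field_simp
    ring
  have hWs : ∀ x y, W x y
      = 5/8 * (py p x y / p x y * (py p x y / p x y)) - 11/6 * px p x y := by
    intro x y
    rw [hW x y, hLyy x y, hLy x y, h2 x y]
    have hp0 := hne x y
    field_simp
    ring
  -- partial derivatives of V and W
  have hVy : ∀ x y, py V x y
      = 5/8 * (((py (px p) x y * p x y - px p x y * py p x y) / p x y ^ 2) * (px p x y / p x y)
          + (px p x y / p x y) * ((py (px p) x y * p x y - px p x y * py p x y) / p x y ^ 2))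
        - 11/6 * py (py p) x y := by
    intro x y
    have hfun : (fun y' => V x y')
        = fun y' => 5/8 * (px p x y' / p x y' * (px p x y' / p x y')) - 11/6 * py p x y' :=
      funext fun y' => hVs x y'
    show deriv (fun y' => V x y') y = _
    rw [hfun]
    have hq : HasDerivAt (fun y' => px p x y' / p x y')
        ((py (px p) x y * p x y - px p x y * py p x y) / p x y ^ 2) y :=
      (hdy spx x y).div (hdy hp x y) (hne x y)
    exact (((hq.mul hq).const_mul (5/8 : ℝ)).sub ((hdy spy x y).const_mul (11/6 : ℝ))).deriv
  have hVx : ∀ x y, px V x y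
      = 5/8 * (((px (px p) x y * p x y - px p x y * px p x y) / p x y ^ 2) * (px p x y / p x y)
          + (px p x y / p x y) * ((px (px p) x y * p x y - px p x y * px p x y) / p x y ^ 2))
        - 11/6 * px (py p) x y := by
    intro x y
    have hfun : (fun x' => V x' y)
        = fun x' => 5/8 * (px p x' y / p x' y * (px p x' y / p x' y)) - 11/6 * py p x' y :=
      funext fun x' => hVs x' y
    show deriv (fun x' => V x' y) x = _
    rw [hfun]
    have hq : HasDerivAt (fun x' => px p x' y / p x' y)
        ((px (px p) x y * p x y - px p x y * px p x y) / p x y ^ 2) x :=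
      (hdx spx x y).div (hdx hp x y) (hne x y)
    exact (((hq.mul hq).const_mul (5/8 : ℝ)).sub ((hdx spy x y).const_mul (11/6 : ℝ))).deriv
  have hWx : ∀ x y, px W x y
      = 5/8 * (((px (py p) x y * p x y - py p x y * px p x y) / p x y ^ 2) * (py p x y / p x y)
          + (py p x y / p x y) * ((px (py p) x y * p x y - py p x y * px p x y) / p x y ^ 2))
        - 11/6 * px (px p) x y := by
    intro x y
    have hfun : (fun x' => W x' y)
        = fun x' => 5/8 * (py p x' y / p x' y * (py p x' y / p x' y)) - 11/6 * px p x' y :=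
      funext fun x' => hWs x' y
    show deriv (fun x' => W x' y) x = _
    rw [hfun]
    have hq : HasDerivAt (fun x' => py p x' y / p x' y)
        ((px (py p) x y * p x y - py p x y * px p x y) / p x y ^ 2) x :=
      (hdx spy x y).div (hdx hp x y) (hne x y)
    exact (((hq.mul hq).const_mul (5/8 : ℝ)).sub ((hdx spx x y).const_mul (11/6 : ℝ))).deriv
  have hWy : ∀ x y, py W x y
      = 5/8 * (((py (py p) x y * p x y - py p x y * py p x y) / p x y ^ 2) * (py p x y / p x y)
          + (py p x y / p x y) * ((py (py p) x y * p x y - py p x y * py p x y) / p x y ^ 2))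
        - 11/6 * py (px p) x y := by
    intro x y
    have hfun : (fun y' => W x y')
        = fun y' => 5/8 * (py p x y' / p x y' * (py p x y' / p x y')) - 11/6 * px p x y' :=
      funext fun y' => hWs x y'
    show deriv (fun y' => W x y') y = _
    rw [hfun]
    have hq : HasDerivAt (fun y' => py p x y' / p x y')
        ((py (py p) x y * p x y - py p x y * py p x y) / p x y ^ 2) y :=
      (hdy spy x y).div (hdy hp x y) (hne x y)
    exact (((hq.mul hq).const_mul (5/8 : ℝ)).sub ((hdy spx x y).const_mul (11/6 : ℝ))).deriv
  -- third derivatives of p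
  have hpxxx : ∀ x y, px (px (px p)) x y
      = (-(4/3) * px p x y) * py p x y + (-(4/3) * p x y) * px (py p) x y := by
    intro x y
    have hfun : (fun x' => px (px p) x' y) = fun x' => -(4/3) * p x' y * py p x' y :=
      funext fun x' => h1 x' y
    show deriv (fun x' => px (px p) x' y) x = _
    rw [hfun]
    exact (((hdx hp x y).const_mul (-(4/3) : ℝ)).mul (hdx spy x y)).deriv
  have hpyyy : ∀ x y, py (py (py p)) x y
      = (-(4/3) * py p x y) * px p x y + (-(4/3) * p x y) * py (px p) x y := by
    intro x y
    have hfun : (fun y' => py (py p) x y') = fun y' => -(4/3) * p x y' * px p x y' :=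
      funext fun y' => h2 x y'
    show deriv (fun y' => py (py p) x y') y = _
    rw [hfun]
    exact (((hdy hp x y).const_mul (-(4/3) : ℝ)).mul (hdy spx x y)).deriv
  refine ⟨fun x y => ?_, fun x y => ?_, fun x y => ?_⟩
  · rw [hpxxx x y, hpyyy x y, hVs x y, hWs x y, hVx x y, hWy x y, hpxy x y, hpyx x y,
      h1 x y, h2 x y]
    have hp0 := hne x y
    set a := p x y with ha
    set b := px p x y with hb
    set c := py p x y with hc
    field_simp
    ring
  · have e : px (fun x y => (p x y) ^ 2) x y = px p x y * p x y + p x y * px p x y := by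
      have hfun : (fun x' => (p x' y) ^ 2) = fun x' => p x' y * p x' y := by
        funext x'; ring
      show deriv (fun x' => (p x' y) ^ 2) x = _
      rw [hfun]
      exact ((hdx hp x y).mul (hdx hp x y)).deriv
    rw [hVy x y, e, hpyx x y, h2 x y]
    have hp0 := hne x y
    set a := p x y with ha
    set b := px p x y with hb
    set c := py p x y with hc
    field_simp
    ring
  · have e : py (fun x y => (p x y) ^ 2) x y = py p x y * p x y + p x y * py p x y := by
      have hfun : (fun y' => (p x y') ^ 2) = fun y' => p x y' * p x y' := by
        funext y'; ring
      show deriv (fun y' => (p x y') ^ 2) y = _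
      rw [hfun]
      exact ((hdy hp x y).mul (hdy hp x y)).deriv
    rw [hWx x y, e, hpxy x y, h1 x y]
    have hp0 := hne x y
    set a := p x y with ha
    set b := px p x y with hb
    set c := py p x y with hc
    field_simp
    ring
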